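/- arXiv:2105.07617 — 3 statements merged into one kernel-verified Lean document; each statement's English description precedes it below -/
import Mathlib

section
/- For all integers r ≥ 0 and t ≥ 0, E(r,t+1) ≥ E(r,t), and equality holds if and only if r = 0. -/
/-- `betaP p t r = ∑_{i=0}^{r-1} C(t,i) (1-p)^i p^(t-i)`. -/
noncomputable def betaP (p : ℝ) (t r : ℕ) : ℝ :=
  ∑ i ∈ Finset.range r, (t.choose i : ℝ) * (1 - p) ^ i * p ^ (t - i)

/-- Expected rank function `E(r,t) = ∑_{i=0}^{t} C(t,i) (1-p)^i p^(t-i) * min{i,r}`. -/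
noncomputable def expRank (p : ℝ) (r t : ℕ) : ℝ :=
  ∑ i ∈ Finset.range (t + 1),
    (t.choose i : ℝ) * (1 - p) ^ i * p ^ (t - i) * ((min i r : ℕ) : ℝ)

/-! Pascal's rule splits `E(r, t + 1)` according to the last trial: with probability `p` it is
lost and the rank stays `min i r`, otherwise it becomes `min (i + 1) r`. These differ exactly
when `i < r`, so `E(r, t + 1) - E(r, t) = (1 - p) · betaP p t r`, the probability that the last
trial arrives while fewer than `r` of the first `t` did. For `r > 0` this event contains `i = 0`,
of probability `p ^ t > 0`; for `r = 0` it is empty. -/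

open Finset

theorem sum_range_choose_succ_mul_pow {R : Type*} [CommSemiring R] (q p : R) (t : ℕ)
    (g : ℕ → R) :
    ∑ i ∈ range (t + 2), ((t + 1).choose i : R) * q ^ i * p ^ (t + 1 - i) * g i
      = p * ∑ i ∈ range (t + 1), (t.choose i : R) * q ^ i * p ^ (t - i) * g i
        + q * ∑ i ∈ range (t + 1), (t.choose i : R) * q ^ i * p ^ (t - i) * g (i + 1) := by
  have pascal := sum_choose_succ_mul (fun i j ↦ q ^ i * p ^ j * g i) t
  simp only [← mul_assoc] at pascal
  rw [pascal, mul_sum, mul_sum]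
  congr 1 <;> refine sum_congr rfl fun i hi ↦ ?_
  · rw [Nat.succ_sub (mem_range_succ_iff.mp hi), pow_succ]
    ring
  · ring

theorem min_succ_eq_min_add_ite (i r : ℕ) :
    min (i + 1) r = min i r + if i < r then 1 else 0 := by
  split_ifs <;> omega

theorem betaP_eq_sum_range_ite (p : ℝ) (t r : ℕ) :
    betaP p t r =
      ∑ i ∈ range (t + 1), if i < r then (t.choose i : ℝ) * (1 - p) ^ i * p ^ (t - i) else 0 := by
  rw [betaP, ← sum_filter]
  refine (sum_subset (fun i hi ↦ ?_) fun i hi hi' ↦ ?_).symm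
  · exact mem_range.mpr (mem_filter.mp hi).2
  · have : t < i := by simp_all
    simp [Nat.choose_eq_zero_of_lt this]

theorem expRank_succ (p : ℝ) (r t : ℕ) :
    expRank p r (t + 1) = expRank p r t + (1 - p) * betaP p t r := by
  have rank_succ :
      ∑ i ∈ range (t + 1), (t.choose i : ℝ) * (1 - p) ^ i * p ^ (t - i) * ((min (i + 1) r : ℕ) : ℝ)
        = expRank p r t + betaP p t r := by
    rw [expRank, betaP_eq_sum_range_ite, ← sum_add_distrib]
    refine sum_congr rfl fun i _ ↦ ?_
    rw [min_succ_eq_min_add_ite]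
    split_ifs <;> push_cast <;> ring
  rw [expRank, sum_range_choose_succ_mul_pow, rank_succ, ← expRank]
  ring

theorem betaP_pos {p : ℝ} (hp0 : 0 < p) (hp1 : p ≤ 1) (t : ℕ) {r : ℕ} (hr : 0 < r) :
    0 < betaP p t r := by
  have hq : 0 ≤ 1 - p := sub_nonneg.mpr hp1
  refine sum_pos' (fun i _ ↦ by positivity) ⟨0, mem_range.mpr hr, ?_⟩
  simpa using pow_pos hp0 t

theorem stmt1 (p : ℝ) (hp0 : 0 < p) (hp1 : p < 1) (r t : ℕ) :
    expRank p r t ≤ expRank p r (t + 1) ∧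
    (expRank p r (t + 1) = expRank p r t ↔ r = 0) := by
  rw [expRank_succ]
  rcases Nat.eq_zero_or_pos r with rfl | hr
  · simp [betaP]
  · have hgain : 0 < (1 - p) * betaP p t r := mul_pos (sub_pos.mpr hp1) (betaP_pos hp0 hp1.le t hr)
    exact ⟨by linarith, ⟨fun h ↦ by linarith, fun h ↦ by omega⟩⟩
end

section
/- For all integers t ≥ 0 and r ≥ 0, β_p(t,r) ≤ β_p(t+1,r+1), and equality holds if and only if t < r. -/
/-! By Pascal's rule, `β(t+1, r+1) = β(t, r) + C(t,r) (1-p)^r p^(t+1-r)`: the increment is a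
single binomial term, which for `0 < p < 1` is nonnegative and vanishes exactly when
`C(t,r) = 0`, i.e. when `t < r`. -/

lemma betaP_succ_right (p : ℝ) (t r : ℕ) :
    betaP p t (r + 1) = betaP p t r + (t.choose r : ℝ) * (1 - p) ^ r * p ^ (t - r) :=
  Finset.sum_range_succ _ _

lemma betaP_succ_succ (p : ℝ) (t r : ℕ) :
    betaP p (t + 1) (r + 1) =
      betaP p t r + (t.choose r : ℝ) * (1 - p) ^ r * p ^ (t + 1 - r) := by
  induction r with
  | zero => simp [betaP]
  | succ r ih =>
    rw [betaP_succ_right, ih, betaP_succ_right]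
    rcases le_or_gt r t with hrt | htr
    · rw [Nat.choose_succ_succ, show t + 1 - r = t - r + 1 by omega,
        show t + 1 - (r + 1) = t - r by omega]
      push_cast
      ring
    · simp [Nat.choose_eq_zero_of_lt htr, Nat.choose_eq_zero_of_lt (Nat.lt_succ_of_lt htr),
        Nat.choose_eq_zero_of_lt (Nat.succ_lt_succ htr)]

lemma choose_mul_pow_mul_pow_eq_zero_iff {p : ℝ} (hp0 : 0 < p) (hp1 : p < 1) (t r k : ℕ) :
    (t.choose r : ℝ) * (1 - p) ^ r * p ^ k = 0 ↔ t < r := by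
  simp [hp0.ne', (sub_pos.2 hp1).ne', Nat.choose_eq_zero_iff]

theorem stmt5 (p : ℝ) (hp0 : 0 < p) (hp1 : p < 1) (t r : ℕ) :
    betaP p t r ≤ betaP p (t + 1) (r + 1) ∧
    (betaP p t r = betaP p (t + 1) (r + 1) ↔ t < r) := by
  have hq : 0 ≤ 1 - p := sub_nonneg.2 hp1.le
  have hinc : 0 ≤ (t.choose r : ℝ) * (1 - p) ^ r * p ^ (t + 1 - r) := by positivity
  rw [betaP_succ_succ, left_eq_add, choose_mul_pow_mul_pow_eq_zero_iff hp0 hp1]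
  exact ⟨le_add_of_nonneg_right hinc, Iff.rfl⟩
end

section
/- If t_max ≤ ∑_{b∈L} r_b, then every assignment t : L → ℕ satisfying t_b ≤ r_b for all b ∈ L and ∑_{b∈L} t_b = t_max is a solution of problem (B), and the optimal value of (B) equals (1-p)·t_max. -/
/-!
Since `min i r ≤ i`, each `E(r,t)` is at most the mean `(1-p) t` of the binomial distribution
`Bin(t, 1-p)`, with equality when `t ≤ r`. Summing over the block bounds every feasible value by
`(1-p) t_max`, and an assignment with `t_b ≤ r_b` attains it; one exists as soon as
`t_max ≤ ∑ r_b`.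
-/

open Finset

/-- The mean of the binomial distribution `Bin(t, 1-p)`. -/
lemma sum_choose_mul_pow_mul_pow_mul_self (p : ℝ) (t : ℕ) :
    ∑ i ∈ range (t + 1), (t.choose i : ℝ) * (1 - p) ^ i * p ^ (t - i) * i = (1 - p) * t := by
  have h := congrArg (Polynomial.eval (1 - p)) (bernsteinPolynomial.sum_smul ℝ t)
  simp only [Polynomial.eval_finsetSum, bernsteinPolynomial,
    Polynomial.eval_mul, Polynomial.eval_pow, Polynomial.eval_sub, Polynomial.eval_one,
    Polynomial.eval_X, Polynomial.eval_natCast, nsmul_eq_mul, sub_sub_cancel] at h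
  rw [mul_comm (1 - p), ← h]
  exact sum_congr rfl fun i _ => by ring

lemma expRank_le {p : ℝ} (hp0 : 0 ≤ p) (hp1 : p ≤ 1) (r t : ℕ) :
    expRank p r t ≤ (1 - p) * t := by
  rw [← sum_choose_mul_pow_mul_pow_mul_self, expRank]
  refine sum_le_sum fun i _ => mul_le_mul_of_nonneg_left ?_ (by positivity)
  exact_mod_cast min_le_left i r

lemma expRank_of_le (p : ℝ) {r t : ℕ} (h : t ≤ r) : expRank p r t = (1 - p) * t := by
  rw [← sum_choose_mul_pow_mul_pow_mul_self, expRank]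
  refine sum_congr rfl fun i hi => ?_
  rw [min_eq_left (Nat.lt_succ_iff.mp (mem_range.mp hi) |>.trans h)]

section Block

variable {ι : Type*} (L : Finset ι) (r t : ι → ℕ)

lemma sum_expRank_le {p : ℝ} (hp0 : 0 ≤ p) (hp1 : p ≤ 1) :
    ∑ b ∈ L, expRank p (r b) (t b) ≤ (1 - p) * ((∑ b ∈ L, t b : ℕ) : ℝ) := by
  rw [Nat.cast_sum, mul_sum]
  exact sum_le_sum fun b _ => expRank_le hp0 hp1 (r b) (t b)

lemma sum_expRank_of_le (p : ℝ) (ht : ∀ b ∈ L, t b ≤ r b) :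
    ∑ b ∈ L, expRank p (r b) (t b) = (1 - p) * ((∑ b ∈ L, t b : ℕ) : ℝ) := by
  rw [Nat.cast_sum, mul_sum]
  exact sum_congr rfl fun b hb => expRank_of_le p (ht b hb)

lemma exists_le_and_sum_eq {n : ℕ} (hn : n ≤ ∑ b ∈ L, r b) :
    ∃ t : ι → ℕ, (∀ b ∈ L, t b ≤ r b) ∧ ∑ b ∈ L, t b = n := by
  classical
  induction L using Finset.induction generalizing n with
  | empty => exact ⟨0, by simp, by simp_all⟩
  | @insert a s ha ih =>
    rw [sum_insert ha] at hn
    obtain ⟨t, ht_le, ht_sum⟩ := ih (n := n - min n (r a)) (by omega)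
    refine ⟨Function.update t a (min n (r a)), ?_, ?_⟩
    · intro b hb
      rcases mem_insert.mp hb with rfl | hb
      · simp
      · simpa [Function.update_of_ne (ne_of_mem_of_not_mem hb ha)] using ht_le b hb
    · rw [sum_insert ha, Function.update_self, sum_update_of_notMem ha, ht_sum]
      omega

end Block

theorem stmt10 {ι : Type*} (p : ℝ) (hp0 : 0 < p) (hp1 : p < 1)
    (L : Finset ι) (r : ι → ℕ) (tmax : ℕ) (h : tmax ≤ ∑ b ∈ L, r b) :
    (∀ t : ι → ℕ, (∀ b ∈ L, t b ≤ r b) → (∑ b ∈ L, t b) = tmax →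
      IsGreatest {x : ℝ | ∃ t' : ι → ℕ, (∑ b ∈ L, t' b) = tmax ∧
        x = ∑ b ∈ L, expRank p (r b) (t' b)} (∑ b ∈ L, expRank p (r b) (t b))) ∧
    IsGreatest {x : ℝ | ∃ t' : ι → ℕ, (∑ b ∈ L, t' b) = tmax ∧
      x = ∑ b ∈ L, expRank p (r b) (t' b)} ((1 - p) * tmax) := by
  have hmax : IsGreatest {x : ℝ | ∃ t' : ι → ℕ, (∑ b ∈ L, t' b) = tmax ∧
      x = ∑ b ∈ L, expRank p (r b) (t' b)} ((1 - p) * tmax) := by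
    obtain ⟨t, ht_le, ht_sum⟩ := exists_le_and_sum_eq L r h
    refine ⟨⟨t, ht_sum, ?_⟩, ?_⟩
    · rw [sum_expRank_of_le L r t p ht_le, ht_sum]
    · rintro _ ⟨t', rfl, rfl⟩
      exact sum_expRank_le L r t' hp0.le hp1.le
  refine ⟨fun t ht_le ht_sum => ?_, hmax⟩
  rwa [sum_expRank_of_le L r t p ht_le, ht_sum]
end
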